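/- Define h : ℝ^d → ℝ^d by h(ξ) = ξ √((1 − ĝ(ξ))/|ξ|²) for ξ ≠ 0 and h(0) = 0, where g is a nonnegative smooth radial function on ℝ^d with ∫g = 1, exponential decay, 0 ≤ ĝ ≤ 1, ĝ(0) = 1, ∇ĝ(0) = 0, ∇²ĝ(0) = −(4π²μ/d)I_d with μ > 0, and 1 − ĝ(ξ) ≥ c₀|ξ|²ĝ(ξ)². Then h is globally Lipschitz on ℝ^d. -/

import Mathlib

open MeasureTheory Real

/-- Fourier transform (convention `ĝ(ξ) = ∫ g(x) e^{-2πi x·ξ} dx`). -/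
noncomputable def fourierTf {d : ℕ} (g : EuclideanSpace ℝ (Fin d) → ℝ)
    (ξ : EuclideanSpace ℝ (Fin d)) : ℂ :=
  ∫ x : EuclideanSpace ℝ (Fin d),
    Complex.exp (-2 * (Real.pi : ℂ) * Complex.I * ((inner ℝ x ξ : ℝ) : ℂ)) * (g x : ℂ)


lemma unit_bound {E : Type*} [NormedAddCommGroup E] [NormedSpace ℝ E] {x y : E}
    (hx : x ≠ 0) (hy : y ≠ 0) :
    ‖‖x‖⁻¹ • x - ‖y‖⁻¹ • y‖ ≤ 2 * ‖x - y‖ / ‖x‖ := by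
  have hx0 : (0:ℝ) < ‖x‖ := norm_pos_iff.mpr hx
  have hy0 : (0:ℝ) < ‖y‖ := norm_pos_iff.mpr hy
  have hsplit : ‖x‖⁻¹ • x - ‖y‖⁻¹ • y = ‖x‖⁻¹ • (x - y) + (‖x‖⁻¹ - ‖y‖⁻¹) • y := by
    rw [smul_sub, sub_smul]; abel
  rw [hsplit]
  have h1 : ‖‖x‖⁻¹ • (x - y)‖ = ‖x - y‖ / ‖x‖ := by
    rw [norm_smul, norm_inv, norm_norm]; ring
  have h2 : ‖(‖x‖⁻¹ - ‖y‖⁻¹) • y‖ = |‖x‖⁻¹ - ‖y‖⁻¹| * ‖y‖ := by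
    rw [norm_smul, Real.norm_eq_abs]
  have h3 : |‖x‖⁻¹ - ‖y‖⁻¹| = |‖y‖ - ‖x‖| / (‖x‖ * ‖y‖) := by
    have : ‖x‖⁻¹ - ‖y‖⁻¹ = (‖y‖ - ‖x‖) / (‖x‖ * ‖y‖) := by field_simp
    rw [this, abs_div, abs_of_pos (mul_pos hx0 hy0)]
  have h4 : |‖y‖ - ‖x‖| ≤ ‖x - y‖ := by
    rw [norm_sub_rev x y]; exact abs_norm_sub_norm_le y x
  calc ‖‖x‖⁻¹ • (x - y) + (‖x‖⁻¹ - ‖y‖⁻¹) • y‖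
      ≤ ‖‖x‖⁻¹ • (x - y)‖ + ‖(‖x‖⁻¹ - ‖y‖⁻¹) • y‖ := norm_add_le _ _
    _ ≤ ‖x - y‖ / ‖x‖ + (‖x - y‖ / (‖x‖ * ‖y‖)) * ‖y‖ := by
        rw [h1, h2, h3]
        gcongr
    _ = 2 * ‖x - y‖ / ‖x‖ := by field_simp; ring

lemma trig_key (u v : ℝ) :
    (1 - Real.cos u) + (1 - Real.cos v) - (1 - Real.cos (u - v)) ≤
      2 * Real.sqrt (1 - Real.cos u) * Real.sqrt (1 - Real.cos v) := by
  set s := Real.sqrt (1 - Real.cos u) with hs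
  set t := Real.sqrt (1 - Real.cos v) with ht
  have hs0 : 0 ≤ s := Real.sqrt_nonneg _
  have ht0 : 0 ≤ t := Real.sqrt_nonneg _
  have hsq : s ^ 2 = 1 - Real.cos u := Real.sq_sqrt (by nlinarith [Real.cos_le_one u])
  have htq : t ^ 2 = 1 - Real.cos v := Real.sq_sqrt (by nlinarith [Real.cos_le_one v])
  have hs2 : s ^ 2 ≤ 2 := by nlinarith [Real.neg_one_le_cos u]
  have ht2 : t ^ 2 ≤ 2 := by nlinarith [Real.neg_one_le_cos v]
  have hsinu : Real.sin u ^ 2 = s ^ 2 * (2 - s ^ 2) := by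
    have := Real.sin_sq_add_cos_sq u; nlinarith
  have hsinv : Real.sin v ^ 2 = t ^ 2 * (2 - t ^ 2) := by
    have := Real.sin_sq_add_cos_sq v; nlinarith
  have hst : s * t ≤ 2 := by nlinarith [sq_nonneg (s - t)]
  have hX : 0 ≤ 2 * s * t - s ^ 2 * t ^ 2 := by nlinarith [mul_nonneg hs0 ht0]
  have hXY : (Real.sin u * Real.sin v) ^ 2 ≤ (2 * s * t - s ^ 2 * t ^ 2) ^ 2 := by
    have : (Real.sin u * Real.sin v) ^ 2 = s ^ 2 * t ^ 2 * ((2 - s ^ 2) * (2 - t ^ 2)) := by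
      rw [mul_pow, hsinu, hsinv]; ring
    nlinarith [sq_nonneg (s - t), sq_nonneg (s * t), mul_nonneg (mul_nonneg hs0 ht0) (mul_nonneg hs0 ht0)]
  have hY : Real.sin u * Real.sin v ≤ 2 * s * t - s ^ 2 * t ^ 2 := by
    nlinarith [hXY, hX, sq_nonneg (Real.sin u * Real.sin v - (2 * s * t - s ^ 2 * t ^ 2))]
  have hcos : Real.cos (u - v) = Real.cos u * Real.cos v + Real.sin u * Real.sin v :=
    Real.cos_sub u v
  nlinarith [hY, hsq, htq]
section
variable {d : ℕ} {g : EuclideanSpace ℝ (Fin d) → ℝ}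

lemma cont_inner (ζ : EuclideanSpace ℝ (Fin d)) :
    Continuous fun x : EuclideanSpace ℝ (Fin d) => (inner ℝ x ζ : ℝ) :=
  continuous_id.inner continuous_const

lemma ft_integrand_eq (ζ : EuclideanSpace ℝ (Fin d)) (x : EuclideanSpace ℝ (Fin d)) :
    Complex.exp (-2 * (Real.pi : ℂ) * Complex.I * ((inner ℝ x ζ : ℝ) : ℂ))
      = Complex.exp (((-(2 * Real.pi * (inner ℝ x ζ : ℝ))) : ℝ) * Complex.I) := by
  congr 1; push_cast; ring

lemma ft_integrand_integrable (hg_int : Integrable g) (hcont : Continuous g)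
    (ζ : EuclideanSpace ℝ (Fin d)) :
    Integrable fun x => Complex.exp (-2 * (Real.pi : ℂ) * Complex.I * ((inner ℝ x ζ : ℝ) : ℂ)) * (g x : ℂ) := by
  refine (hg_int.norm.mono' ?_ ?_)
  · apply Continuous.aestronglyMeasurable
    exact (Complex.continuous_exp.comp
      (continuous_const.mul (Complex.continuous_ofReal.comp (cont_inner ζ)))).mul
      (Complex.continuous_ofReal.comp hcont)
  · filter_upwards with x
    rw [norm_mul, ft_integrand_eq, Complex.norm_exp]
    simp [Complex.re_ofReal_mul]
lemma ft_re (hg_int : Integrable g) (hcont : Continuous g) (ζ : EuclideanSpace ℝ (Fin d)) :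
    (fourierTf g ζ).re = ∫ x, Real.cos (2 * Real.pi * (inner ℝ x ζ : ℝ)) * g x := by
  have := integral_re (ft_integrand_integrable hg_int hcont ζ)
  rw [fourierTf]
  simp only [RCLike.re_to_complex] at this
  rw [← this]
  congr 1; funext x
  rw [ft_integrand_eq]
  rw [Complex.mul_re, Complex.exp_ofReal_mul_I_re, Complex.exp_ofReal_mul_I_im,
    Complex.ofReal_re, Complex.ofReal_im, Real.cos_neg]
  ring
end


lemma poly_exp_bound {c : ℝ} (hc : 0 < c) (m : ℕ) (t : ℝ) (ht : 0 ≤ t) :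
    (1 + t) ^ m ≤ (max 1 ((m : ℝ) / c)) ^ m * Real.exp (c * t) := by
  set B := max 1 ((m:ℝ) / c) with hB
  have hB1 : (1:ℝ) ≤ B := le_max_left _ _
  rcases Nat.eq_zero_or_pos m with hm | hm
  · subst hm; simpa using Real.one_le_exp (by positivity)
  have hm' : (0:ℝ) < m := by exact_mod_cast hm
  have hBm : (m:ℝ) ≤ B * c := by
    calc (m:ℝ) = (m:ℝ)/c * c := by field_simp
      _ ≤ B * c := by gcongr; exact le_max_right _ _
  have key : 1 + t ≤ B * Real.exp (c * t / m) := by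
    have h1 : 1 + c * t / m ≤ Real.exp (c * t / m) := by
      have := Real.add_one_le_exp (c * t / m); linarith
    have h2 : 1 + t ≤ B * (1 + c * t / m) := by
      rw [mul_add, mul_one]
      have : t ≤ B * (c * t / m) := by
        have h4 : t * (m:ℝ) ≤ t * (B * c) := by nlinarith
        calc t = t * (m:ℝ) / (m:ℝ) := by field_simp
          _ ≤ t * (B * c) / (m:ℝ) := by gcongr
          _ = B * (c * t / (m:ℝ)) := by field_simp
      linarith
    refine h2.trans ?_
    exact mul_le_mul_of_nonneg_left h1 (by linarith)
  calc (1 + t) ^ m ≤ (B * Real.exp (c * t / m)) ^ m :=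
        pow_le_pow_left₀ (by linarith) key m
    _ = B ^ m * Real.exp (c * t / m) ^ m := by rw [mul_pow]
    _ = B ^ m * Real.exp (c * t) := by
        rw [← Real.exp_nat_mul]
        congr 1; field_simp

section
variable {d : ℕ} {g : EuclideanSpace ℝ (Fin d) → ℝ}

lemma moment2_integrable (hcont : Continuous g) (hnn : ∀ x, 0 ≤ g x)
    (hdecay : ∃ C c : ℝ, 0 < c ∧ ∀ x, g x ≤ C * Real.exp (-c * ‖x‖)) :
    Integrable fun x : EuclideanSpace ℝ (Fin d) => ‖x‖ ^ 2 * g x := by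
  obtain ⟨C, c, hc, hC⟩ := hdecay
  have hC0 : 0 ≤ C := by
    have h0 := hC 0
    simp only [norm_zero, mul_zero, neg_zero, Real.exp_zero, mul_one] at h0
    exact le_trans (hnn 0) h0
  set m : ℕ := d + 3 with hm
  set B := max 1 ((m:ℝ) / c) with hBdef
  have hB1 : (1:ℝ) ≤ B := le_max_left _ _
  have hbracket : Integrable
      (fun x : EuclideanSpace ℝ (Fin d) => (1 + ‖x‖) ^ (-((d:ℝ) + 1))) := by
    apply integrable_one_add_norm
    rw [finrank_euclideanSpace, Fintype.card_fin]
    linarith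
  refine ((hbracket.const_mul (C * B ^ m)).mono'
    ((continuous_norm.pow 2).mul hcont).aestronglyMeasurable ?_)
  filter_upwards with x
  set t := ‖x‖ with htdef
  have ht : 0 ≤ t := norm_nonneg x
  have hpos : (0:ℝ) < 1 + t := by linarith
  have hrw : (1 + t) ^ (-((d:ℝ) + 1)) = ((1 + t) ^ (d + 1 : ℕ))⁻¹ := by
    rw [← Real.rpow_natCast (1 + t) (d + 1), ← Real.rpow_neg hpos.le]
    congr 1; push_cast; ring
  rw [Real.norm_eq_abs, abs_of_nonneg (mul_nonneg (by positivity) (hnn x)), hrw]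
  have hpow : (0:ℝ) < (1 + t) ^ (d + 1 : ℕ) := by positivity
  rw [← div_eq_mul_inv, le_div_iff₀ hpow]
  have h1 : t ^ 2 * (1 + t) ^ (d + 1 : ℕ) ≤ (1 + t) ^ m := by
    calc t ^ 2 * (1 + t) ^ (d + 1 : ℕ) ≤ (1 + t) ^ 2 * (1 + t) ^ (d + 1 : ℕ) :=
          mul_le_mul_of_nonneg_right (pow_le_pow_left₀ ht (by linarith) 2) hpow.le
      _ = (1 + t) ^ m := by rw [← pow_add]; congr 1; omega
  have h2 : (1 + t) ^ m ≤ B ^ m * Real.exp (c * t) := poly_exp_bound hc m t ht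
  calc t ^ 2 * g x * (1 + t) ^ (d + 1 : ℕ)
      ≤ t ^ 2 * (C * Real.exp (-c * t)) * (1 + t) ^ (d + 1 : ℕ) := by
        gcongr
        exact hC x
    _ = C * Real.exp (-c * t) * (t ^ 2 * (1 + t) ^ (d + 1 : ℕ)) := by ring
    _ ≤ C * Real.exp (-c * t) * (B ^ m * Real.exp (c * t)) :=
        mul_le_mul_of_nonneg_left (h1.trans h2) (by positivity)
    _ = C * B ^ m * (Real.exp (-c * t) * Real.exp (c * t)) := by ring
    _ = C * B ^ m := by rw [← Real.exp_add]; simp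
end
section
variable {d : ℕ} {g : EuclideanSpace ℝ (Fin d) → ℝ}


noncomputable def pfun (ζ x : EuclideanSpace ℝ (Fin d)) : ℝ :=
  1 - Real.cos (2 * Real.pi * (inner ℝ x ζ : ℝ))

lemma pfun_nonneg (ζ x : EuclideanSpace ℝ (Fin d)) : 0 ≤ pfun ζ x := by
  have := Real.cos_le_one (2 * Real.pi * (inner ℝ x ζ : ℝ)); rw [pfun]; linarith

lemma pfun_cont (ζ : EuclideanSpace ℝ (Fin d)) : Continuous (pfun ζ) :=
  continuous_const.sub (Real.continuous_cos.comp (continuous_const.mul (cont_inner ζ)))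

lemma pg_integrable (hg_int : Integrable g) (hcont : Continuous g) (hnn : ∀ x, 0 ≤ g x)
    (ζ : EuclideanSpace ℝ (Fin d)) : Integrable fun x => pfun ζ x * g x := by
  refine (hg_int.const_mul 2).mono' (((pfun_cont ζ).mul hcont).aestronglyMeasurable) ?_
  filter_upwards with x
  have h1 := pfun_nonneg ζ x
  have h2 : pfun ζ x ≤ 2 := by
    have := Real.neg_one_le_cos (2 * Real.pi * (inner ℝ x ζ : ℝ)); rw [pfun]; linarith
  rw [Real.norm_eq_abs, abs_of_nonneg (mul_nonneg h1 (hnn x))]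
  exact mul_le_mul_of_nonneg_right h2 (hnn x)

lemma cs_key (hg_int : Integrable g) (hcont : Continuous g) (hnn : ∀ x, 0 ≤ g x)
    (ξ η : EuclideanSpace ℝ (Fin d)) :
    ∫ x, Real.sqrt (pfun ξ x * g x) * Real.sqrt (pfun η x * g x) ≤
      Real.sqrt (∫ x, pfun ξ x * g x) * Real.sqrt (∫ x, pfun η x * g x) := by
  have hconj : Real.HolderConjugate 2 2 := Real.HolderConjugate.two_two
  have hmeas : ∀ ζ : EuclideanSpace ℝ (Fin d),
      AEStronglyMeasurable (fun x => Real.sqrt (pfun ζ x * g x)) volume := fun ζ =>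
    (Real.continuous_sqrt.comp ((pfun_cont ζ).mul hcont)).aestronglyMeasurable
  have hsq : ∀ ζ x, Real.sqrt (pfun ζ x * g x) ^ 2 = pfun ζ x * g x := fun ζ x =>
    Real.sq_sqrt (mul_nonneg (pfun_nonneg ζ x) (hnn x))
  have hmem : ∀ ζ : EuclideanSpace ℝ (Fin d),
      MemLp (fun x => Real.sqrt (pfun ζ x * g x)) (ENNReal.ofReal 2) volume := by
    intro ζ
    rw [show ENNReal.ofReal 2 = 2 by norm_num]
    rw [memLp_two_iff_integrable_sq (hmeas ζ)]
    have := pg_integrable hg_int hcont hnn ζ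
    refine this.congr ?_
    filter_upwards with x using (hsq ζ x).symm
  have := integral_mul_le_Lp_mul_Lq_of_nonneg hconj
    (Filter.Eventually.of_forall fun x => Real.sqrt_nonneg _)
    (Filter.Eventually.of_forall fun x => Real.sqrt_nonneg _) (hmem ξ) (hmem η)
  calc ∫ x, Real.sqrt (pfun ξ x * g x) * Real.sqrt (pfun η x * g x)
      ≤ (∫ x, Real.sqrt (pfun ξ x * g x) ^ (2:ℝ)) ^ (1/2:ℝ) *
        (∫ x, Real.sqrt (pfun η x * g x) ^ (2:ℝ)) ^ (1/2:ℝ) := this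
    _ = Real.sqrt (∫ x, pfun ξ x * g x) * Real.sqrt (∫ x, pfun η x * g x) := by
        congr 1 <;> rw [← Real.sqrt_eq_rpow] <;> congr 1 <;>
          refine integral_congr_ae (Filter.Eventually.of_forall fun x => ?_) <;>
          simp only [Real.rpow_two] <;> exact hsq _ x
end

section
variable {d : ℕ} {g : EuclideanSpace ℝ (Fin d) → ℝ}


lemma I_triangle (hg_int : Integrable g) (hcont : Continuous g) (hnn : ∀ x, 0 ≤ g x)
    (ξ η : EuclideanSpace ℝ (Fin d)) :
    (Real.sqrt (∫ x, pfun ξ x * g x) - Real.sqrt (∫ x, pfun η x * g x)) ^ 2 ≤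
      ∫ x, pfun (ξ - η) x * g x := by
  have pg := pg_integrable hg_int hcont hnn
  have hsum : Integrable (fun x => pfun ξ x * g x + pfun η x * g x) := (pg ξ).add (pg η)
  have hI0 : ∀ ζ : EuclideanSpace ℝ (Fin d), 0 ≤ ∫ x, pfun ζ x * g x := fun ζ =>
    integral_nonneg fun x => mul_nonneg (pfun_nonneg ζ x) (hnn x)
  set Iξ := ∫ x, pfun ξ x * g x with hIξ
  set Iη := ∫ x, pfun η x * g x with hIη
  set Iδ := ∫ x, pfun (ξ - η) x * g x with hIδ
  have expand : (Real.sqrt Iξ - Real.sqrt Iη) ^ 2 =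
      Iξ + Iη - 2 * Real.sqrt Iξ * Real.sqrt Iη := by
    rw [sub_sq, Real.sq_sqrt (hI0 ξ), Real.sq_sqrt (hI0 η)]; ring
  rw [expand]
  have step1 : Iξ + Iη - Iδ = ∫ x, (pfun ξ x + pfun η x - pfun (ξ - η) x) * g x := by
    rw [show (fun x => (pfun ξ x + pfun η x - pfun (ξ - η) x) * g x)
        = fun x => (pfun ξ x * g x + pfun η x * g x) - pfun (ξ - η) x * g x from
      funext fun x => by ring, integral_sub hsum (pg (ξ - η)),
      integral_add (pg ξ) (pg η)]
  have step2 : ∀ x, (pfun ξ x + pfun η x - pfun (ξ - η) x) * g x ≤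
      2 * (Real.sqrt (pfun ξ x * g x) * Real.sqrt (pfun η x * g x)) := by
    intro x
    have hd : pfun (ξ - η) x =
        1 - Real.cos (2 * Real.pi * (inner ℝ x ξ : ℝ) - 2 * Real.pi * (inner ℝ x η : ℝ)) := by
      rw [pfun, inner_sub_right]; ring_nf
    have htk := trig_key (2 * Real.pi * (inner ℝ x ξ : ℝ)) (2 * Real.pi * (inner ℝ x η : ℝ))
    rw [← hd] at htk
    have hmul := mul_le_mul_of_nonneg_right htk (hnn x)
    refine hmul.trans_eq ?_
    rw [Real.sqrt_mul (pfun_nonneg ξ x), Real.sqrt_mul (pfun_nonneg η x)]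
    have hgg : Real.sqrt (g x) * Real.sqrt (g x) = g x := Real.mul_self_sqrt (hnn x)
    simp only [pfun]
    linear_combination (-2 * Real.sqrt (1 - Real.cos (2 * Real.pi * (inner ℝ x ξ : ℝ))) *
      Real.sqrt (1 - Real.cos (2 * Real.pi * (inner ℝ x η : ℝ)))) * hgg
  have hprod : Integrable (fun x => Real.sqrt (pfun ξ x * g x) * Real.sqrt (pfun η x * g x)) := by
    refine hsum.mono'
      (((Real.continuous_sqrt.comp ((pfun_cont ξ).mul hcont)).mul
        (Real.continuous_sqrt.comp ((pfun_cont η).mul hcont))).aestronglyMeasurable) ?_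
    filter_upwards with x
    have h1 : 0 ≤ Real.sqrt (pfun ξ x * g x) := Real.sqrt_nonneg _
    have h2 : 0 ≤ Real.sqrt (pfun η x * g x) := Real.sqrt_nonneg _
    have e1 : Real.sqrt (pfun ξ x * g x) ^ 2 = pfun ξ x * g x :=
      Real.sq_sqrt (mul_nonneg (pfun_nonneg ξ x) (hnn x))
    have e2 : Real.sqrt (pfun η x * g x) ^ 2 = pfun η x * g x :=
      Real.sq_sqrt (mul_nonneg (pfun_nonneg η x) (hnn x))
    rw [Real.norm_eq_abs, abs_of_nonneg (mul_nonneg h1 h2)]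
    nlinarith [sq_nonneg (Real.sqrt (pfun ξ x * g x) - Real.sqrt (pfun η x * g x))]
  have hlhs : Integrable (fun x => (pfun ξ x + pfun η x - pfun (ξ - η) x) * g x) := by
    rw [show (fun x => (pfun ξ x + pfun η x - pfun (ξ - η) x) * g x)
        = fun x => (pfun ξ x * g x + pfun η x * g x) - pfun (ξ - η) x * g x from
      funext fun x => by ring]
    exact hsum.sub (pg (ξ - η))
  have step3 : Iξ + Iη - Iδ ≤
      2 * ∫ x, Real.sqrt (pfun ξ x * g x) * Real.sqrt (pfun η x * g x) := by
    rw [step1, show (2:ℝ) * ∫ x, Real.sqrt (pfun ξ x * g x) * Real.sqrt (pfun η x * g x)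
        = ∫ x, 2 * (Real.sqrt (pfun ξ x * g x) * Real.sqrt (pfun η x * g x)) from
      (integral_const_mul 2 _).symm]
    exact integral_mono hlhs (hprod.const_mul 2) step2
  have := cs_key hg_int hcont hnn ξ η
  nlinarith [this, step3]
end

section
variable {d : ℕ} {g : EuclideanSpace ℝ (Fin d) → ℝ}

lemma cosg_integrable (hg_int : Integrable g) (hcont : Continuous g) (hnn : ∀ x, 0 ≤ g x)
    (ζ : EuclideanSpace ℝ (Fin d)) :
    Integrable fun x => Real.cos (2 * Real.pi * (inner ℝ x ζ : ℝ)) * g x := by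
  have : (fun x => Real.cos (2 * Real.pi * (inner ℝ x ζ : ℝ)) * g x)
      = fun x => g x - pfun ζ x * g x := funext fun x => by simp [pfun]; ring
  rw [this]
  exact hg_int.sub (pg_integrable hg_int hcont hnn ζ)

lemma one_sub_ft_eq (hg_int : Integrable g) (hcont : Continuous g) (hnn : ∀ x, 0 ≤ g x)
    (hmass : ∫ x, g x = 1) (ζ : EuclideanSpace ℝ (Fin d)) :
    1 - (fourierTf g ζ).re = ∫ x, pfun ζ x * g x := by
  rw [ft_re hg_int hcont]
  rw [show (1:ℝ) = ∫ x, g x from hmass.symm,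
    ← integral_sub hg_int (cosg_integrable hg_int hcont hnn ζ)]
  congr 1; funext x; simp [pfun]; ring

lemma pg_int_le (hg_int : Integrable g) (hcont : Continuous g) (hnn : ∀ x, 0 ≤ g x)
    (hdecay : ∃ C c : ℝ, 0 < c ∧ ∀ x, g x ≤ C * Real.exp (-c * ‖x‖))
    (ζ : EuclideanSpace ℝ (Fin d)) :
    ∫ x, pfun ζ x * g x ≤ (2 * Real.pi ^ 2 * ∫ x, ‖x‖ ^ 2 * g x) * ‖ζ‖ ^ 2 := by
  have hM := moment2_integrable hcont hnn hdecay
  have ptwise : ∀ x, pfun ζ x * g x ≤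
      2 * Real.pi ^ 2 * ‖ζ‖ ^ 2 * (‖x‖ ^ 2 * g x) := by
    intro x
    have h1 : pfun ζ x ≤ 2 * Real.pi ^ 2 * (inner ℝ x ζ : ℝ) ^ 2 := by
      have := Real.one_sub_sq_div_two_le_cos (x := 2 * Real.pi * (inner ℝ x ζ : ℝ))
      rw [pfun]; nlinarith
    have h2 : (inner ℝ x ζ : ℝ) ^ 2 ≤ ‖x‖ ^ 2 * ‖ζ‖ ^ 2 := by
      have ha := abs_real_inner_le_norm x ζ
      nlinarith [sq_abs (inner ℝ x ζ : ℝ), abs_nonneg (inner ℝ x ζ : ℝ), norm_nonneg x,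
        norm_nonneg ζ]
    have h3 : pfun ζ x ≤ 2 * Real.pi ^ 2 * ‖ζ‖ ^ 2 * ‖x‖ ^ 2 := by nlinarith [Real.pi_pos]
    have := mul_le_mul_of_nonneg_right h3 (hnn x)
    nlinarith [this]
  calc ∫ x, pfun ζ x * g x
      ≤ ∫ x, 2 * Real.pi ^ 2 * ‖ζ‖ ^ 2 * (‖x‖ ^ 2 * g x) :=
        integral_mono (pg_integrable hg_int hcont hnn ζ)
          (hM.const_mul (2 * Real.pi ^ 2 * ‖ζ‖ ^ 2)) ptwise
    _ = 2 * Real.pi ^ 2 * ‖ζ‖ ^ 2 * ∫ x, ‖x‖ ^ 2 * g x := integral_const_mul _ _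
    _ = (2 * Real.pi ^ 2 * ∫ x, ‖x‖ ^ 2 * g x) * ‖ζ‖ ^ 2 := by ring
end

open scoped Classical in
theorem stmt11 (d : ℕ) (hd : 0 < d) (g : EuclideanSpace ℝ (Fin d) → ℝ) (μ c₀ : ℝ)
    (hg_nonneg : ∀ x, 0 ≤ g x)
    (hg_smooth : ContDiff ℝ (⊤ : ℕ∞) g)
    (hg_radial : ∀ x y : EuclideanSpace ℝ (Fin d), ‖x‖ = ‖y‖ → g x = g y)
    (hg_int : Integrable g)
    (hg_mass : ∫ x, g x = 1)
    (hg_decay : ∃ C c : ℝ, 0 < c ∧ ∀ x, g x ≤ C * Real.exp (-c * ‖x‖))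
    (hg_real : ∀ ξ, (fourierTf g ξ).im = 0)
    (hg_ft_nonneg : ∀ ξ, 0 ≤ (fourierTf g ξ).re)
    (hg_ft_le_one : ∀ ξ, (fourierTf g ξ).re ≤ 1)
    (hg_ft_zero : (fourierTf g 0).re = 1)
    (hg_ft_deriv : fderiv ℝ (fun ξ => (fourierTf g ξ).re) 0 = 0)
    (hμ_pos : 0 < μ)
    (hg_ft_hess : ∀ v w : EuclideanSpace ℝ (Fin d),
      fderiv ℝ (fun ξ => fderiv ℝ (fun ζ => (fourierTf g ζ).re) ξ v) 0 w
        = -(4 * Real.pi ^ 2 * μ / d) * (inner ℝ v w : ℝ))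
    (hc₀ : 0 < c₀)
    (hg_c₀ : ∀ ξ, c₀ * ‖ξ‖ ^ 2 * (fourierTf g ξ).re ^ 2 ≤ 1 - (fourierTf g ξ).re)
    (h : EuclideanSpace ℝ (Fin d) → EuclideanSpace ℝ (Fin d))
    (hh : ∀ ξ, h ξ = if ξ = 0 then 0 else
      Real.sqrt ((1 - (fourierTf g ξ).re) / ‖ξ‖ ^ 2) • ξ) :
    ∃ L : NNReal, LipschitzWith L h := by
  have hcont : Continuous g := hg_smooth.continuous
  set M₂ : ℝ := ∫ x, ‖x‖ ^ 2 * g x with hM₂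
  have hM₂0 : 0 ≤ M₂ := integral_nonneg fun x => mul_nonneg (sq_nonneg _) (hg_nonneg x)
  set K : ℝ := 2 * Real.pi ^ 2 * M₂ with hK
  have hK0 : 0 ≤ K := by positivity
  -- q ζ = 1 - ĝ(ζ)
  set q : EuclideanSpace ℝ (Fin d) → ℝ := fun ζ => 1 - (fourierTf g ζ).re with hq
  have hq_eq : ∀ ζ, q ζ = ∫ x, pfun ζ x * g x := fun ζ =>
    one_sub_ft_eq hg_int hcont hg_nonneg hg_mass ζ
  have hq0 : ∀ ζ, 0 ≤ q ζ := fun ζ => by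
    simp only [hq]; linarith [hg_ft_le_one ζ]
  have hqK : ∀ ζ, q ζ ≤ K * ‖ζ‖ ^ 2 := fun ζ => by
    rw [hq_eq]; exact pg_int_le hg_int hcont hg_nonneg hg_decay ζ
  -- a := sqrt ∘ q and its properties
  set a : EuclideanSpace ℝ (Fin d) → ℝ := fun ζ => Real.sqrt (q ζ) with ha
  have ha_le : ∀ ζ, a ζ ≤ Real.sqrt K * ‖ζ‖ := fun ζ => by
    rw [ha]
    calc Real.sqrt (q ζ) ≤ Real.sqrt (K * ‖ζ‖ ^ 2) := Real.sqrt_le_sqrt (hqK ζ)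
      _ = Real.sqrt K * ‖ζ‖ := by
          rw [Real.sqrt_mul hK0, Real.sqrt_sq (norm_nonneg ζ)]
  have ha0 : ∀ ζ, 0 ≤ a ζ := fun ζ => Real.sqrt_nonneg _
  have ha_lip : ∀ ξ η, |a ξ - a η| ≤ Real.sqrt K * ‖ξ - η‖ := by
    intro ξ η
    have htri : (a ξ - a η) ^ 2 ≤ q (ξ - η) := by
      simp only [ha]
      rw [hq_eq ξ, hq_eq η, hq_eq (ξ - η)]
      exact I_triangle hg_int hcont hg_nonneg ξ η
    calc |a ξ - a η| = Real.sqrt ((a ξ - a η) ^ 2) := (Real.sqrt_sq_eq_abs _).symm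
      _ ≤ Real.sqrt (K * ‖ξ - η‖ ^ 2) := Real.sqrt_le_sqrt (htri.trans (hqK _))
      _ = Real.sqrt K * ‖ξ - η‖ := by
          rw [Real.sqrt_mul hK0, Real.sqrt_sq (norm_nonneg _)]
  -- formula for h on nonzero points
  have hform : ∀ ζ : EuclideanSpace ℝ (Fin d), ζ ≠ 0 → h ζ = a ζ • (‖ζ‖⁻¹ • ζ) := by
    intro ζ hζ
    rw [hh ζ, if_neg hζ, smul_smul]
    congr 1
    rw [ha, hq, Real.sqrt_div (by linarith [hg_ft_le_one ζ]) (‖ζ‖ ^ 2),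
      Real.sqrt_sq (norm_nonneg ζ), div_eq_mul_inv]
  -- the Lipschitz bound
  refine ⟨Real.toNNReal (3 * Real.sqrt K), LipschitzWith.of_dist_le_mul fun ξ η => ?_⟩
  have hcoe : (Real.toNNReal (3 * Real.sqrt K) : ℝ) = 3 * Real.sqrt K :=
    Real.coe_toNNReal _ (by positivity)
  rw [hcoe, dist_eq_norm, dist_eq_norm]
  have hsK : 0 ≤ Real.sqrt K := Real.sqrt_nonneg _
  by_cases hξ : ξ = 0
  · by_cases hη : η = 0
    · simp [hξ, hη]
    · rw [hξ, hh 0, if_pos rfl, hform η hη]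
      have h1 : ‖(0:EuclideanSpace ℝ (Fin d)) - a η • (‖η‖⁻¹ • η)‖ = a η * ‖‖η‖⁻¹ • η‖ := by
        rw [zero_sub, norm_neg, norm_smul, Real.norm_eq_abs, abs_of_nonneg (ha0 η)]
      have hu : ‖‖η‖⁻¹ • η‖ = 1 := by
        rw [norm_smul, norm_inv, norm_norm]
        field_simp [norm_ne_zero_iff.mpr hη]
      rw [h1, hu, mul_one, zero_sub, norm_neg]
      calc a η ≤ Real.sqrt K * ‖η‖ := ha_le η
        _ ≤ 3 * Real.sqrt K * ‖η‖ := by nlinarith [norm_nonneg η, hsK]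
  · by_cases hη : η = 0
    · rw [hη, hh 0, if_pos rfl, hform ξ hξ]
      have hu : ‖‖ξ‖⁻¹ • ξ‖ = 1 := by
        rw [norm_smul, norm_inv, norm_norm]
        field_simp [norm_ne_zero_iff.mpr hξ]
      rw [sub_zero, sub_zero, norm_smul, Real.norm_eq_abs, abs_of_nonneg (ha0 ξ), hu, mul_one]
      calc a ξ ≤ Real.sqrt K * ‖ξ‖ := ha_le ξ
        _ ≤ 3 * Real.sqrt K * ‖ξ‖ := by nlinarith [norm_nonneg ξ, hsK]
    · -- both nonzero
      have hηn : (0:ℝ) < ‖η‖ := norm_pos_iff.mpr hη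
      rw [hform ξ hξ, hform η hη]
      set uξ := ‖ξ‖⁻¹ • ξ with huξ
      set uη := ‖η‖⁻¹ • η with huη
      have hsplit : a ξ • uξ - a η • uη = (a ξ - a η) • uξ + a η • (uξ - uη) := by
        rw [sub_smul, smul_sub]; abel
      have huξ1 : ‖uξ‖ = 1 := by
        rw [huξ, norm_smul, norm_inv, norm_norm]
        field_simp [norm_ne_zero_iff.mpr hξ]
      have hub : ‖uξ - uη‖ ≤ 2 * ‖ξ - η‖ / ‖η‖ := by
        rw [show uξ - uη = -(uη - uξ) by abel, norm_neg]
        calc ‖uη - uξ‖ ≤ 2 * ‖η - ξ‖ / ‖η‖ := unit_bound hη hξ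
          _ = 2 * ‖ξ - η‖ / ‖η‖ := by rw [norm_sub_rev]
      calc ‖a ξ • uξ - a η • uη‖
          ≤ ‖(a ξ - a η) • uξ‖ + ‖a η • (uξ - uη)‖ := by
            rw [hsplit]; exact norm_add_le _ _
        _ = |a ξ - a η| + a η * ‖uξ - uη‖ := by
            rw [norm_smul, Real.norm_eq_abs, huξ1, mul_one, norm_smul, Real.norm_eq_abs,
              abs_of_nonneg (ha0 η)]
        _ ≤ Real.sqrt K * ‖ξ - η‖ + (Real.sqrt K * ‖η‖) * (2 * ‖ξ - η‖ / ‖η‖) :=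
            add_le_add (ha_lip ξ η)
              (mul_le_mul (ha_le η) hub (norm_nonneg _) (mul_nonneg hsK (norm_nonneg η)))
        _ = 3 * Real.sqrt K * ‖ξ - η‖ := by
            have harith : ∀ s n r : ℝ, n ≠ 0 → s * r + (s * n) * (2 * r / n) = 3 * s * r := by
              intros s n r hn; field_simp; ring
            exact harith _ _ _ hηn.ne'
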